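/- Let k be a field of characteristic 0, x ∈ k nonzero, and α, γ ∈ k with γ ≠ 0. Define χ: k[t,t⁻¹] → k by χ(f) = α·f(x) + γ·f'(x), and define the bilinear form B_χ(f,g) = χ(fg' − f'g). Then g lies in the radical of B_χ (i.e., B_χ(f,g) = 0 for all f ∈ k[t,t⁻¹]) if and only if g(x) = 0 and α·g'(x) + γ·g''(x) = 0. Moreover B_χ(f,g) = f(x)·(αg'(x)+γg''(x)) − g(x)·(αf'(x)+γf''(x)) for all f,g. -/

import Mathlib

/-- Formal derivative on Laurent polynomials, sending `tⁿ` to `n·tⁿ⁻¹`. -/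
noncomputable def lderiv {k : Type*} [CommRing k] (f : LaurentPolynomial k) : LaurentPolynomial k :=
  AddMonoidAlgebra.ofCoeff (Finsupp.sum f.coeff fun n a => Finsupp.single (n - 1) ((n : k) * a))

/-- Evaluation of a Laurent polynomial at a point `x` (of a field). -/
noncomputable def lev {k : Type*} [Field k] (x : k) (f : LaurentPolynomial k) : k :=
  Finsupp.sum f.coeff fun n a => a * x ^ n

/-- The local function `χ = χ_{x;α,γ} : f ↦ α·f(x) + γ·f'(x)` on `k[t,t⁻¹]`. -/
noncomputable def chiLoc {k : Type*} [Field k] (x α γ : k) (f : LaurentPolynomial k) : k :=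
  α * lev x f + γ * lev x (lderiv f)

/-- The associated bilinear form `B_χ(f,g) = χ(fg' − f'g)`. -/
noncomputable def Bchi {k : Type*} [Field k] (x α γ : k) (f g : LaurentPolynomial k) : k :=
  chiLoc x α γ (f * lderiv g - lderiv f * g)

/-! Since `(fg' - f'g)' = fg'' - f''g`, the Leibniz rule and multiplicativity of evaluation at
`x ≠ 0` give `B_χ(f, g) = f(x) χ(g') - g(x) χ(f')`. Testing `g` against `f = 1` yields
`χ(g') = 0`, and against `f = (t - x)²`,
where `f(x) = f'(x) = 0` and `f''(x) = 2`, yields `2γ g(x) = 0`. -/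

open AddMonoidAlgebra

section Derivative

variable {k : Type*} [CommRing k]

lemma lderiv_single (n : ℤ) (a : k) :
    lderiv (single n a : LaurentPolynomial k) = single (n - 1) ((n : k) * a) := by
  unfold lderiv
  rw [coeff_single, Finsupp.sum_single_index] <;>
    simp only [ofCoeff_single, mul_zero, Finsupp.single_zero]

lemma lderiv_add (f g : LaurentPolynomial k) : lderiv (f + g) = lderiv f + lderiv g := by
  unfold lderiv
  rw [coeff_add, Finsupp.sum_add_index] <;> intros <;> simp [mul_add, ofCoeff_add]

lemma lderiv_sub (f g : LaurentPolynomial k) : lderiv (f - g) = lderiv f - lderiv g :=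
  (AddMonoidHom.mk' lderiv lderiv_add).map_sub f g

lemma lderiv_mul (f g : LaurentPolynomial k) :
    lderiv (f * g) = f * lderiv g + lderiv f * g := by
  induction f using induction_linear with
  | zero => simp [lderiv]
  | add p q hp hq => rw [add_mul, lderiv_add, hp, hq, lderiv_add]; ring
  | single m a =>
    induction g using induction_linear with
    | zero => simp [lderiv]
    | add p q hp hq => rw [mul_add, lderiv_add, hp, hq, lderiv_add]; ring
    | single n b =>
      simp only [single_mul_single, lderiv_single]
      rw [show m + n - 1 = m + (n - 1) by ring, show m - 1 + n = m + (n - 1) by ring,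
        ← single_add]
      congr 1
      push_cast
      ring

end Derivative

section Evaluation

variable {k : Type*} [Field k] (x : k)

lemma lev_single (n : ℤ) (a : k) : lev x (single n a : LaurentPolynomial k) = a * x ^ n := by
  unfold lev
  rw [coeff_single, Finsupp.sum_single_index]
  simp

lemma lev_add (f g : LaurentPolynomial k) : lev x (f + g) = lev x f + lev x g := by
  unfold lev
  rw [coeff_add, Finsupp.sum_add_index] <;> intros <;> simp [add_mul]

lemma lev_sub (f g : LaurentPolynomial k) : lev x (f - g) = lev x f - lev x g :=
  (AddMonoidHom.mk' (lev x) (lev_add x)).map_sub f g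

lemma lev_mul (hx : x ≠ 0) (f g : LaurentPolynomial k) :
    lev x (f * g) = lev x f * lev x g := by
  induction f using induction_linear with
  | zero => simp [lev]
  | add p q hp hq => rw [add_mul, lev_add, hp, hq, lev_add]; ring
  | single m a =>
    induction g using induction_linear with
    | zero => simp [lev]
    | add p q hp hq => rw [mul_add, lev_add, hp, hq, lev_add]; ring
    | single n b => rw [single_mul_single, lev_single, lev_single, lev_single, zpow_add₀ hx]; ring

end Evaluation

section Radical

variable {k : Type*} [Field k] {x : k} (α γ : k)

lemma Bchi_eq (hx : x ≠ 0) (f g : LaurentPolynomial k) :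
    Bchi x α γ f g =
      lev x f * chiLoc x α γ (lderiv g) - lev x g * chiLoc x α γ (lderiv f) := by
  simp only [Bchi, chiLoc, lderiv_sub, lderiv_mul, lev_sub, lev_add, lev_mul x hx]
  ring

lemma Bchi_one_left (hx : x ≠ 0) (g : LaurentPolynomial k) :
    Bchi x α γ (single 0 1) g = chiLoc x α γ (lderiv g) := by
  simp only [Bchi_eq α γ hx, chiLoc, lev_single, lderiv_single]
  simp

-- the first argument is `(t - x)²`
lemma Bchi_sq_sub_left (hx : x ≠ 0) (g : LaurentPolynomial k) :
    Bchi x α γ (single 2 1 - single 1 (2 * x) + single 0 (x ^ 2)) g = -(2 * γ) * lev x g := by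
  simp only [Bchi_eq α γ hx, chiLoc, lev_single, lderiv_single, lderiv_add, lderiv_sub, lev_add,
    lev_sub]
  norm_num
  ring

end Radical

/-- For `x ≠ 0`, `γ ≠ 0` and `χ(f) = α f(x) + γ f'(x)`:  `g` lies in the radical of
`B_χ(f,g) = χ(fg' − f'g)` iff `g(x) = 0` and `α g'(x) + γ g''(x) = 0`; moreover
`B_χ(f,g) = f(x)(αg'(x)+γg''(x)) − g(x)(αf'(x)+γf''(x))` for all `f, g`. -/
theorem radical_Bchi_gamma_ne_zero {k : Type*} [Field k] [CharZero k]
    (x α γ : k) (hx : x ≠ 0) (hγ : γ ≠ 0) :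
    (∀ g : LaurentPolynomial k,
      (∀ f : LaurentPolynomial k, Bchi x α γ f g = 0) ↔
        (lev x g = 0 ∧ α * lev x (lderiv g) + γ * lev x (lderiv (lderiv g)) = 0)) ∧
    (∀ f g : LaurentPolynomial k,
      Bchi x α γ f g =
        lev x f * (α * lev x (lderiv g) + γ * lev x (lderiv (lderiv g))) -
        lev x g * (α * lev x (lderiv f) + γ * lev x (lderiv (lderiv f)))) := by
  refine ⟨fun g => ⟨fun hrad => ?_, fun ⟨hg, hg'⟩ f => ?_⟩, Bchi_eq α γ hx⟩
  · have hsq := hrad (single 2 1 - single 1 (2 * x) + single 0 (x ^ 2))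
    rw [Bchi_sq_sub_left α γ hx] at hsq
    exact ⟨by simpa [hγ] using hsq, (Bchi_one_left α γ hx g).symm.trans (hrad _)⟩
  · rw [Bchi_eq α γ hx]
    simp only [chiLoc, hg, hg', mul_zero, zero_mul, sub_zero]
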